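/- Let G = (V, E) be a finite simple graph whose vertex set is partitioned into nonempty sets V_1, …, V_k, such that every edge of G joins vertices of two distinct classes and, for every pair 1 ≤ i < j ≤ k, there is at least one edge between V_i and V_j. For i < j let E_{i,j} be the set of edges with one endpoint in V_i and one in V_j. Let D be the digraph with vertex set V ⊎ E ⊎ V' ⊎ {s_1, …, s_k}, where V' = {v' : v ∈ V} is a copy of V, and with the following arcs: e → u and e → v for every edge e = uv ∈ E; e → f for every ordered pair of distinct edges e, f lying in the same set E_{i,j}; v → v' for every v ∈ V; and s_i → v for every 1 ≤ i ≤ k and every v ∈ V_i. Then D has a multipacking of size at least 2k + k(k−1)/2 if and only if G has an independent set S with |S ∩ V_i| = 1 for every 1 ≤ i ≤ k. -/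

import Mathlib

open scoped Classical

/-- `HasPath A k u v` means there is a directed walk of length `k` from `u` to `v`
in the digraph with arc relation `A`. -/
def HasPath {V : Type*} (A : V → V → Prop) : ℕ → V → V → Prop
  | 0, u, v => u = v
  | (n+1), u, v => ∃ w, A u w ∧ HasPath A n w v

/-- The directed distance from `u` to `v` (in `ℕ∞`, `⊤` meaning no directed path exists). -/
noncomputable def ddist {V : Type*} (A : V → V → Prop) (u v : V) : ℕ∞ :=
  sInf {n : ℕ∞ | ∃ k : ℕ, n = (k : ℕ∞) ∧ HasPath A k u v}

/-- `f : V → ℕ` is a dominating broadcast: every vertex `v` is within directed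
distance `f t` of some vertex `t` with `f t ≥ 1`. -/
def IsDomBroadcast {V : Type*} (A : V → V → Prop) (f : V → ℕ) : Prop :=
  ∀ v : V, ∃ t : V, 1 ≤ f t ∧ ddist A t v ≤ (f t : ℕ∞)

/-- The cost of a broadcast. -/
def cost {V : Type*} [Fintype V] (f : V → ℕ) : ℕ := ∑ v, f v

/-- The broadcast domination number `γ_b`. -/
noncomputable def gammaB {V : Type*} [Fintype V] (A : V → V → Prop) : ℕ :=
  sInf {c : ℕ | ∃ f : V → ℕ, IsDomBroadcast A f ∧ cost f = c}

/-- `S` is a multipacking: for every vertex `v` and every `e ≥ 1`, at most `e`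
vertices of `S` are at directed distance at most `e` from `v`. -/
noncomputable def IsMultipacking {V : Type*} [Fintype V] (A : V → V → Prop) (S : Finset V) : Prop :=
  ∀ v : V, ∀ e : ℕ, 1 ≤ e → (S.filter (fun u => ddist A v u ≤ (e : ℕ∞))).card ≤ e

/-- The multipacking number `mp`. -/
noncomputable def mpNum {V : Type*} [Fintype V] (A : V → V → Prop) : ℕ :=
  sSup {c : ℕ | ∃ S : Finset V, IsMultipacking A S ∧ S.card = c}

/-!
Split the digraph into blocks: for each class `i` the block `{s_i} ∪ V_i ∪ V_i'`, which lies
within distance 2 of `s_i`, and for each pair `{i, j}` the arc-complete set `E_{i,j}`. A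
multipacking meets the former at most twice and the latter at most once, so it has at most
`2k + k(k-1)/2` vertices, and one of that size meets every block maximally. As the closed
out-neighbourhood of `s_i` holds at most one packing vertex, such a packing contains a copy `w_i'`
of some `w_i ∈ V_i`; and an edge `e = w_i w_j` would have the packing vertex of `E_{i,j}`, `w_i'`
and `w_j'` within distance 2. Conversely, for an independent transversal `{w_i}` the vertices
`s_i`, `w_i'` and one edge of each `E_{i,j}` form a multipacking: only balls around edge vertices
can hold three of them, and the radius-2 ball around `e = ab` reaches only the copies `a'`, `b'`,
of which at most one is chosen.
-/

section Digraph

variable {α : Type*} {A : α → α → Prop}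

theorem ddist_le_of_hasPath {n : ℕ} {u v : α} (h : HasPath A n u v) : ddist A u v ≤ n :=
  sInf_le ⟨n, rfl, h⟩

theorem ddist_le_iff {n : ℕ} {u v : α} : ddist A u v ≤ n ↔ ∃ m ≤ n, HasPath A m u v := by
  refine ⟨fun h => ?_, fun ⟨m, hm, hp⟩ =>
    (ddist_le_of_hasPath hp).trans (Nat.cast_le.2 hm)⟩
  have hne : {d : ℕ∞ | ∃ m : ℕ, d = m ∧ HasPath A m u v}.Nonempty := by
    by_contra hemp
    rw [Set.not_nonempty_iff_eq_empty] at hemp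
    simp [ddist, hemp] at h
  obtain ⟨m, hm, hp⟩ := csInf_mem hne
  rw [ddist, hm, Nat.cast_le] at h
  exact ⟨m, h, hp⟩

theorem ddist_le_zero_iff {u v : α} : ddist A u v ≤ 0 ↔ u = v := by
  rw [← Nat.cast_zero, ddist_le_iff]
  refine ⟨?_, fun h => ⟨0, le_rfl, h⟩⟩
  rintro ⟨_ | m, hm, hp⟩
  · exact hp
  · omega

theorem ddist_self_le (u : α) (n : ℕ∞) : ddist A u u ≤ n :=
  (ddist_le_zero_iff.2 rfl).trans zero_le

theorem ddist_le_succ_iff {n : ℕ} {u v : α} :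
    ddist A u v ≤ (n + 1 : ℕ) ↔ u = v ∨ ∃ w, A u w ∧ ddist A w v ≤ n := by
  simp only [ddist_le_iff]
  constructor
  · rintro ⟨_ | m, hm, hp⟩
    · exact Or.inl hp
    · obtain ⟨w, huw, hp⟩ := hp
      exact Or.inr ⟨w, huw, m, by omega, hp⟩
  · rintro (rfl | ⟨w, huw, m, hm, hp⟩)
    · exact ⟨0, by omega, rfl⟩
    · exact ⟨m + 1, by omega, w, huw, hp⟩

theorem ddist_le_one_iff {u v : α} : ddist A u v ≤ 1 ↔ u = v ∨ A u v := by
  have h := ddist_le_succ_iff (A := A) (n := 0) (u := u) (v := v)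
  simpa only [zero_add, Nat.cast_one, Nat.cast_zero, ddist_le_zero_iff, exists_eq_right] using h

theorem HasPath.mem_of_closed {T : Set α} (hT : ∀ x y, A x y → x ∈ T → y ∈ T) :
    ∀ {n : ℕ} {u v : α}, HasPath A n u v → u ∈ T → v ∈ T
  | 0, _, _, h, hu => h ▸ hu
  | _ + 1, _, _, ⟨_, huw, hp⟩, hu => hp.mem_of_closed hT (hT _ _ huw hu)

theorem mem_of_ddist_le_of_closed {T : Set α} (hT : ∀ x y, A x y → x ∈ T → y ∈ T)
    {n : ℕ} {u v : α} (h : ddist A u v ≤ n) (hu : u ∈ T) : v ∈ T := by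
  obtain ⟨m, -, hp⟩ := ddist_le_iff.1 h
  exact hp.mem_of_closed hT hu

theorem IsMultipacking.card_le [Fintype α] {S T : Finset α} (hS : IsMultipacking A S)
    (hTS : T ⊆ S) {v : α} {e : ℕ} (he : 1 ≤ e) (hT : ∀ u ∈ T, ddist A v u ≤ e) :
    T.card ≤ e :=
  (Finset.card_le_card fun u hu => Finset.mem_filter.2 ⟨hTS hu, hT u hu⟩).trans (hS v e he)

end Digraph

theorem SimpleGraph.exists_independent_transversal_iff {V : Type*} {k : ℕ} (G : SimpleGraph V)
    (part : V → Fin k) :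
    (∃ I : Finset V, (∀ u ∈ I, ∀ v ∈ I, ¬ G.Adj u v) ∧
        ∀ i, (I.filter (part · = i)).card = 1) ↔
      ∃ w : Fin k → V, (∀ i, part (w i) = i) ∧ ∀ i j, ¬ G.Adj (w i) (w j) := by
  constructor
  · rintro ⟨I, hind, hone⟩
    choose w hw using fun i => Finset.card_eq_one.1 (hone i)
    have hmem (i : Fin k) : w i ∈ I ∧ part (w i) = i :=
      Finset.mem_filter.1 (hw i ▸ Finset.mem_singleton_self _)
    exact ⟨w, fun i => (hmem i).2, fun i j => hind _ (hmem i).1 _ (hmem j).1⟩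
  · rintro ⟨w, hw, hind⟩
    refine ⟨Finset.univ.image w, by simpa using hind,
      fun i => Finset.card_eq_one.2 ⟨w i, ?_⟩⟩
    ext v
    simp only [Finset.mem_filter, Finset.mem_image, Finset.mem_univ, true_and,
      Finset.mem_singleton]
    constructor
    · rintro ⟨⟨j, rfl⟩, rfl⟩
      rw [hw]
    · rintro rfl
      exact ⟨⟨i, rfl⟩, hw i⟩

namespace MISReduction

variable {V : Type*} {G : SimpleGraph V} {k : ℕ} {part : V → Fin k}

variable (G k) in
abbrev Vertex := V ⊕ (G.edgeSet ⊕ (V ⊕ Fin k))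

variable (G k) in
abbrev orig (v : V) : Vertex G k := Sum.inl v

variable (k) in
abbrev edge (f : G.edgeSet) : Vertex G k := Sum.inr (Sum.inl f)

variable (G k) in
abbrev copy (v : V) : Vertex G k := Sum.inr (Sum.inr (Sum.inl v))

variable (G) in
abbrev source (i : Fin k) : Vertex G k := Sum.inr (Sum.inr (Sum.inr i))

variable (G part) in
def arc : Vertex G k → Vertex G k → Prop
  | Sum.inl v, y => y = copy G k v
  | Sum.inr (Sum.inl e), y => (∃ u ∈ (e : Sym2 V), y = orig G k u) ∨
      ∃ f : G.edgeSet, e ≠ f ∧ Sym2.map part (e : Sym2 V) = Sym2.map part f ∧ y = edge k f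
  | Sum.inr (Sum.inr (Sum.inl _)), _ => False
  | Sum.inr (Sum.inr (Sum.inr i)), y => ∃ v, part v = i ∧ y = orig G k v

variable {n : ℕ} {y : Vertex G k}

theorem eq_of_ddist_copy_le {v : V} (h : ddist (arc G part) (copy G k v) y ≤ n) :
    y = copy G k v :=
  mem_of_ddist_le_of_closed (T := {copy G k v})
    (by rintro x (u | f | u | i) hxy rfl <;> simp [arc] at hxy) h rfl

theorem eq_or_eq_of_ddist_orig_le {v : V} (h : ddist (arc G part) (orig G k v) y ≤ n) :
    y = orig G k v ∨ y = copy G k v :=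
  mem_of_ddist_le_of_closed (T := {orig G k v, copy G k v})
    (by rintro x (u | f | u | i) hxy (rfl | rfl) <;> simp_all [arc]) h (.inl rfl)

theorem eq_or_exists_of_ddist_source_le {i : Fin k} (h : ddist (arc G part) (source G i) y ≤ n) :
    y = source G i ∨ ∃ u, part u = i ∧ (y = orig G k u ∨ y = copy G k u) :=
  mem_of_ddist_le_of_closed
    (T := {y | y = source G i ∨ ∃ u, part u = i ∧ (y = orig G k u ∨ y = copy G k u)})
    (by rintro x (u | f | u | j) hxy (rfl | ⟨u', hu', rfl | rfl⟩) <;> simp_all [arc])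
    h (.inl rfl)

theorem exists_of_ddist_edge_le {f : G.edgeSet} (h : ddist (arc G part) (edge k f) y ≤ n) :
    (∃ g : G.edgeSet, Sym2.map part (g : Sym2 V) = Sym2.map part f ∧ y = edge k g) ∨
      ∃ u, part u ∈ Sym2.map part (f : Sym2 V) ∧ (y = orig G k u ∨ y = copy G k u) := by
  refine mem_of_ddist_le_of_closed (T := {y | (∃ g : G.edgeSet,
    Sym2.map part (g : Sym2 V) = Sym2.map part f ∧ y = edge k g) ∨
      ∃ u, part u ∈ Sym2.map part (f : Sym2 V) ∧ (y = orig G k u ∨ y = copy G k u)})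
    ?_ h (.inl ⟨f, rfl, rfl⟩)
  rintro x (u | g | u | j) hxy (⟨g', hg', rfl⟩ | ⟨u', hu', rfl | rfl⟩) <;>
    simp [arc] at hxy
  · exact .inr ⟨u, hg' ▸ Sym2.mem_map.2 ⟨u, hxy, rfl⟩, .inl rfl⟩
  · exact .inl ⟨g, hxy.2.symm.trans hg', rfl⟩
  · exact .inr ⟨u, hxy ▸ hu', .inr rfl⟩

theorem eq_or_exists_of_ddist_source_le_one {i : Fin k}
    (h : ddist (arc G part) (source G i) y ≤ 1) : y = source G i ∨ ∃ u, y = orig G k u := by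
  rcases y with u | f | u | j <;> simp [ddist_le_one_iff, arc] at h ⊢
  exact h.symm

theorem exists_of_ddist_edge_le_one {f : G.edgeSet} (h : ddist (arc G part) (edge k f) y ≤ 1) :
    (∃ g : G.edgeSet, Sym2.map part (g : Sym2 V) = Sym2.map part f ∧ y = edge k g) ∨
      ∃ u, y = orig G k u := by
  rcases y with u | g | u | j <;> simp [ddist_le_one_iff, arc] at h ⊢
  rcases h with rfl | h
  · rfl
  · exact h.2.symm

theorem mem_of_ddist_edge_copy_le_two {f : G.edgeSet} {v : V}
    (h : ddist (arc G part) (edge k f) (copy G k v) ≤ 2) : v ∈ (f : Sym2 V) := by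
  rw [show (2 : ℕ∞) = (1 + 1 : ℕ) from rfl, ddist_le_succ_iff] at h
  rcases h with h | ⟨w, hw, h⟩
  · simp at h
  rcases w with u | g | u | j <;> simp [ddist_le_one_iff, arc] at hw h
  exact h ▸ hw

theorem ddist_edge_edge_le_one {f g : G.edgeSet}
    (h : Sym2.map part (f : Sym2 V) = Sym2.map part g) :
    ddist (arc G part) (edge k f) (edge k g) ≤ 1 := by
  rw [ddist_le_one_iff]
  by_cases hfg : f = g
  · exact .inl (hfg ▸ rfl)
  · exact .inr (.inr ⟨g, hfg, h, rfl⟩)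

theorem ddist_edge_copy_le_two {f : G.edgeSet} {v : V} (hv : v ∈ (f : Sym2 V)) :
    ddist (arc G part) (edge k f) (copy G k v) ≤ 2 :=
  ddist_le_of_hasPath (n := 2) ⟨orig G k v, .inl ⟨v, hv, rfl⟩, copy G k v, rfl, rfl⟩

theorem ddist_source_orig_le_one {v : V} :
    ddist (arc G part) (source G (part v)) (orig G k v) ≤ 1 :=
  ddist_le_one_iff.2 (.inr ⟨v, rfl, rfl⟩)

theorem ddist_source_copy_le_two {v : V} :
    ddist (arc G part) (source G (part v)) (copy G k v) ≤ 2 :=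
  ddist_le_of_hasPath (n := 2) ⟨orig G k v, ⟨v, rfl, rfl⟩, copy G k v, rfl, rfl⟩

variable (part) in
def block : Vertex G k → Fin k ⊕ Sym2 (Fin k)
  | Sum.inl v => Sum.inl (part v)
  | Sum.inr (Sum.inl f) => Sum.inr (Sym2.map part f)
  | Sum.inr (Sum.inr (Sum.inl v)) => Sum.inl (part v)
  | Sum.inr (Sum.inr (Sum.inr i)) => Sum.inl i

-- Diagonal blocks are empty, as every edge joins two distinct classes.
def blockBound : Fin k ⊕ Sym2 (Fin k) → ℕ :=
  Sum.elim (fun _ => 2) (fun m => if m.IsDiag then 0 else 1)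

theorem sum_blockBound : ∑ t, blockBound (k := k) t = 2 * k + k.choose 2 := by
  have h := Sym2.card_subtype_not_diag (α := Fin k)
  rw [Fintype.card_subtype, Fintype.card_fin, Finset.card_filter] at h
  simp [blockBound, Fintype.sum_sum_type, ← h, ite_not, mul_comm]

theorem ddist_source_le_two_of_block_eq {x : Vertex G k} {i : Fin k}
    (hx : block part x = Sum.inl i) : ddist (arc G part) (source G i) x ≤ 2 := by
  rcases x with v | f | v | j <;> simp only [block, Sum.inl.injEq, reduceCtorEq] at hx <;> subst hx
  · exact ddist_source_orig_le_one.trans (by norm_num)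
  · exact ddist_source_copy_le_two
  · exact ddist_self_le _ _

theorem exists_edge_of_block_eq {x : Vertex G k} {m : Sym2 (Fin k)}
    (hx : block part x = Sum.inr m) : ∃ g : G.edgeSet, x = edge k g ∧ Sym2.map part g = m := by
  rcases x with v | g | v | j <;> simp only [block, Sum.inr.injEq, reduceCtorEq] at hx
  exact ⟨g, rfl, hx⟩

theorem not_isDiag_map_part (hcross : ∀ u v, G.Adj u v → part u ≠ part v) (f : G.edgeSet) :
    ¬ (Sym2.map part (f : Sym2 V)).IsDiag := by
  obtain ⟨⟨a, b⟩, hab⟩ := f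
  simpa using hcross a b hab

section Forward

variable [Fintype V] [Fintype G.edgeSet] {S : Finset (Vertex G k)}
  (hcross : ∀ u v, G.Adj u v → part u ≠ part v) (hS : IsMultipacking (arc G part) S)
include hcross hS

theorem card_filter_block_le (t : Fin k ⊕ Sym2 (Fin k)) :
    (S.filter (block part · = t)).card ≤ blockBound t := by
  rcases t with i | m
  · exact hS.card_le (Finset.filter_subset _ _) (v := source G i) (e := 2) (by norm_num)
      fun x hx => ddist_source_le_two_of_block_eq (Finset.mem_filter.1 hx).2
  rcases (S.filter (block part · = Sum.inr m)).eq_empty_or_nonempty with hemp | ⟨x, hx⟩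
  · simp [hemp]
  obtain ⟨g, rfl, rfl⟩ := exists_edge_of_block_eq (Finset.mem_filter.1 hx).2
  simp only [blockBound, Sum.elim_inr, if_neg (not_isDiag_map_part hcross g)]
  refine hS.card_le (Finset.filter_subset _ _) (v := edge k g) le_rfl fun y hy => ?_
  obtain ⟨g', rfl, hg'⟩ := exists_edge_of_block_eq (Finset.mem_filter.1 hy).2
  exact_mod_cast ddist_edge_edge_le_one hg'.symm

variable (hcard : 2 * k + k.choose 2 ≤ S.card)
include hcard

theorem card_filter_block_eq (t : Fin k ⊕ Sym2 (Fin k)) :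
    (S.filter (block part · = t)).card = blockBound t := by
  have hsum : ∑ t, (S.filter (block part · = t)).card = ∑ t, blockBound t :=
    le_antisymm (Finset.sum_le_sum fun t _ => card_filter_block_le hcross hS t)
      (by rwa [sum_blockBound, ← Finset.card_eq_sum_card_fiberwise fun x _ => Finset.mem_univ _])
  exact (Finset.sum_eq_sum_iff_of_le fun t _ => card_filter_block_le hcross hS t).1 hsum t
    (Finset.mem_univ t)

theorem exists_copy_mem (i : Fin k) : ∃ v, part v = i ∧ copy G k v ∈ S := by
  by_contra! hno
  have hsub : S.filter (block part · = Sum.inl i) ⊆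
      S.filter (ddist (arc G part) (source G i) · ≤ (1 : ℕ)) := by
    intro x hx
    obtain ⟨hxS, hxi⟩ := Finset.mem_filter.1 hx
    refine Finset.mem_filter.2 ⟨hxS, ?_⟩
    rw [Nat.cast_one]
    rcases x with v | f | v | j <;> simp only [block, Sum.inl.injEq, reduceCtorEq] at hxi
    · exact hxi ▸ ddist_source_orig_le_one
    · exact absurd hxS (hno v hxi)
    · exact hxi ▸ ddist_self_le _ _
  have := (Finset.card_le_card hsub).trans (hS _ 1 le_rfl)
  rw [card_filter_block_eq hcross hS hcard] at this
  simp [blockBound] at this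

theorem not_adj_of_copy_mem {u v : V} (hu : copy G k u ∈ S) (hv : copy G k v ∈ S) :
    ¬ G.Adj u v := by
  intro huv
  set f : G.edgeSet := ⟨s(u, v), huv⟩
  obtain ⟨x, hx⟩ : (S.filter (block part · = Sum.inr (Sym2.map part f))).Nonempty := by
    rw [← Finset.card_pos, card_filter_block_eq hcross hS hcard]
    simp [blockBound, not_isDiag_map_part hcross f]
  obtain ⟨hxS, hxf⟩ := Finset.mem_filter.1 hx
  obtain ⟨g, rfl, hg⟩ := exists_edge_of_block_eq hxf
  have h3 : ({edge k g, copy G k u, copy G k v} : Finset (Vertex G k)).card ≤ 2 := by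
    refine hS.card_le (by simp [Finset.insert_subset_iff, *]) (v := edge k f) (by norm_num) ?_
    simp only [Finset.mem_insert, Finset.mem_singleton, forall_eq_or_imp, forall_eq]
    exact ⟨(ddist_edge_edge_le_one hg.symm).trans (by norm_num),
      ddist_edge_copy_le_two (Sym2.mem_mk_left u v),
      ddist_edge_copy_le_two (Sym2.mem_mk_right u v)⟩
  rw [Finset.card_insert_of_notMem (by simp), Finset.card_pair (by simpa using huv.ne)] at h3
  omega

theorem exists_independent_section_of_isMultipacking :
    ∃ w : Fin k → V, (∀ i, part (w i) = i) ∧ ∀ i j, ¬ G.Adj (w i) (w j) := by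
  choose w hw using exists_copy_mem hcross hS hcard
  exact ⟨w, fun i => (hw i).1, fun i j => not_adj_of_copy_mem hcross hS hcard (hw i).2 (hw j).2⟩

end Forward

section Backward

variable (w : Fin k → V)
  (rep : {m : Sym2 (Fin k) // ¬ m.IsDiag} → G.edgeSet)

noncomputable def packing : Finset (Vertex G k) :=
  Finset.univ.image (Sum.elim (source G) (Sum.elim (copy G k ∘ w) (edge k ∘ rep)))

variable {w rep}

theorem orig_notMem_packing {v : V} : orig G k v ∉ packing w rep := by
  simp [packing]

theorem eq_of_copy_mem_packing (hw : ∀ i, part (w i) = i) {v : V}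
    (hv : copy G k v ∈ packing w rep) : w (part v) = v := by
  obtain ⟨i, rfl⟩ : ∃ i, w i = v := by simpa [packing] using hv
  rw [hw]

theorem card_packing (hw : ∀ i, part (w i) = i)
    (hrep : ∀ m, Sym2.map part (rep m : Sym2 V) = m) :
    (packing w rep).card = 2 * k + k.choose 2 := by
  have hw_inj : Function.Injective w := fun i j h => by rw [← hw i, h, hw]
  have hrep_inj : Function.Injective rep := fun m m' h => Subtype.ext (by rw [← hrep m, h, hrep])
  rw [packing, Finset.card_image_of_injective]
  · rw [Finset.card_univ, Fintype.card_sum, Fintype.card_sum, Fintype.card_fin,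
      Sym2.card_subtype_not_diag, Fintype.card_fin, two_mul, add_assoc]
  rintro (i | i | m) (j | j | m') h <;> simp [hw_inj.eq_iff, hrep_inj.eq_iff] at h <;> rw [h]

theorem card_filter_ddist_orig_le (v : V) {e : ℕ} (he : 1 ≤ e) :
    ((packing w rep).filter (ddist (arc G part) (orig G k v) · ≤ e)).card ≤ e := by
  refine (Finset.card_le_card (t := {copy G k v}) fun y hy => ?_).trans (by simpa using he)
  obtain ⟨hyS, hy⟩ := Finset.mem_filter.1 hy
  rcases eq_or_eq_of_ddist_orig_le hy with rfl | rfl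
  · exact absurd hyS orig_notMem_packing
  · exact Finset.mem_singleton_self _

theorem card_filter_ddist_copy_le (v : V) {e : ℕ} (he : 1 ≤ e) :
    ((packing w rep).filter (ddist (arc G part) (copy G k v) · ≤ e)).card ≤ e := by
  refine (Finset.card_le_card (t := {copy G k v}) fun y hy => ?_).trans (by simpa using he)
  exact Finset.mem_singleton.2 (eq_of_ddist_copy_le (Finset.mem_filter.1 hy).2)

theorem card_filter_ddist_source_le (hw : ∀ i, part (w i) = i) (i : Fin k) {e : ℕ}
    (he : 1 ≤ e) :
    ((packing w rep).filter (ddist (arc G part) (source G i) · ≤ e)).card ≤ e := by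
  obtain rfl | he2 := he.eq_or_lt
  · refine (Finset.card_le_card (t := {source G i}) fun y hy => ?_).trans (by simp)
    obtain ⟨hyS, hy⟩ := Finset.mem_filter.1 hy
    rcases eq_or_exists_of_ddist_source_le_one (by exact_mod_cast hy) with rfl | ⟨u, rfl⟩
    · exact Finset.mem_singleton_self _
    · exact absurd hyS orig_notMem_packing
  · refine (Finset.card_le_card (t := {source G i, copy G k (w i)}) fun y hy => ?_).trans
      (Finset.card_le_two.trans he2)
    obtain ⟨hyS, hy⟩ := Finset.mem_filter.1 hy
    rcases eq_or_exists_of_ddist_source_le hy with rfl | ⟨u, rfl, rfl | rfl⟩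
    · simp
    · exact absurd hyS orig_notMem_packing
    · simp [eq_of_copy_mem_packing hw hyS]

theorem exists_eq_of_copy_mem_packing_of_adj (hw : ∀ i, part (w i) = i)
    (hind : ∀ i j, ¬ G.Adj (w i) (w j)) {a b : V} (hab : G.Adj a b) :
    ∃ c, ∀ u ∈ s(a, b), copy G k u ∈ packing w rep → u = c := by
  by_cases ha : w (part a) = a
  · refine ⟨a, fun u hu huS => (Sym2.mem_iff.1 hu).resolve_right ?_⟩
    rintro rfl
    exact hind (part a) (part u) (by rwa [ha, eq_of_copy_mem_packing hw huS])
  · refine ⟨b, fun u hu huS => (Sym2.mem_iff.1 hu).resolve_left ?_⟩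
    rintro rfl
    exact ha (eq_of_copy_mem_packing hw huS)

theorem exists_eq_of_edge_mem_packing (hcross : ∀ u v, G.Adj u v → part u ≠ part v)
    (hrep : ∀ m, Sym2.map part (rep m : Sym2 V) = m) (f : G.edgeSet) :
    ∃ g₀, ∀ g : G.edgeSet, edge k g ∈ packing w rep →
      Sym2.map part (g : Sym2 V) = Sym2.map part f → g = g₀ := by
  refine ⟨rep ⟨_, not_isDiag_map_part hcross f⟩, fun g hg h => ?_⟩
  obtain ⟨m, rfl⟩ : ∃ m, rep m = g := by simpa [packing] using hg
  exact congrArg rep (Subtype.ext ((hrep m).symm.trans h))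

theorem card_filter_ddist_edge_le (hcross : ∀ u v, G.Adj u v → part u ≠ part v)
    (hw : ∀ i, part (w i) = i) (hind : ∀ i j, ¬ G.Adj (w i) (w j))
    (hrep : ∀ m, Sym2.map part (rep m : Sym2 V) = m) (f : G.edgeSet) {e : ℕ} (he : 1 ≤ e) :
    ((packing w rep).filter (ddist (arc G part) (edge k f) · ≤ e)).card ≤ e := by
  obtain ⟨g₀, hg₀⟩ := exists_eq_of_edge_mem_packing (w := w) hcross hrep f
  obtain ⟨⟨a, b⟩, hab⟩ := f
  obtain rfl | rfl | he3 : e = 1 ∨ e = 2 ∨ 3 ≤ e := by omega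
  · refine (Finset.card_le_card (t := {edge k g₀}) fun y hy => ?_).trans (by simp)
    obtain ⟨hyS, hy⟩ := Finset.mem_filter.1 hy
    rcases exists_of_ddist_edge_le_one (by exact_mod_cast hy) with ⟨g, hg, rfl⟩ | ⟨u, rfl⟩
    · simp [hg₀ g hyS hg]
    · exact absurd hyS orig_notMem_packing
  · obtain ⟨c, hc⟩ := exists_eq_of_copy_mem_packing_of_adj (rep := rep) hw hind hab
    refine (Finset.card_le_card (t := {edge k g₀, copy G k c}) fun y hy => ?_).trans
      Finset.card_le_two
    obtain ⟨hyS, hy⟩ := Finset.mem_filter.1 hy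
    rcases exists_of_ddist_edge_le hy with ⟨g, hg, rfl⟩ | ⟨u, -, rfl | rfl⟩
    · simp [hg₀ g hyS hg]
    · exact absurd hyS orig_notMem_packing
    · simp [hc u (mem_of_ddist_edge_copy_le_two (by exact_mod_cast hy)) hyS]
  · refine (Finset.card_le_card
      (t := {edge k g₀, copy G k (w (part a)), copy G k (w (part b))}) fun y hy => ?_).trans
      (Finset.card_le_three.trans he3)
    obtain ⟨hyS, hy⟩ := Finset.mem_filter.1 hy
    rcases exists_of_ddist_edge_le hy with ⟨g, hg, rfl⟩ | ⟨u, hu, rfl | rfl⟩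
    · simp [hg₀ g hyS hg]
    · exact absurd hyS orig_notMem_packing
    · rw [← eq_of_copy_mem_packing hw hyS]
      rcases Sym2.mem_iff.1 (Sym2.map_mk part a b ▸ hu) with h | h <;> simp [h]

theorem isMultipacking_packing [Fintype V] [Fintype G.edgeSet]
    (hcross : ∀ u v, G.Adj u v → part u ≠ part v) (hw : ∀ i, part (w i) = i)
    (hind : ∀ i j, ¬ G.Adj (w i) (w j)) (hrep : ∀ m, Sym2.map part (rep m : Sym2 V) = m) :
    IsMultipacking (arc G part) (packing w rep) := by
  rintro (v | f | v | i) e he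
  · exact card_filter_ddist_orig_le v he
  · exact card_filter_ddist_edge_le hcross hw hind hrep f he
  · exact card_filter_ddist_copy_le v he
  · exact card_filter_ddist_source_le hw i he

end Backward

theorem exists_edge_map_eq
    (hfull : ∀ i j, i ≠ j → ∃ u v, G.Adj u v ∧ part u = i ∧ part v = j)
    (m : {m : Sym2 (Fin k) // ¬ m.IsDiag}) :
    ∃ f : G.edgeSet, Sym2.map part (f : Sym2 V) = m := by
  obtain ⟨⟨i, j⟩, hij⟩ := m
  obtain ⟨u, v, huv, rfl, rfl⟩ := hfull i j (by simpa using hij)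
  exact ⟨⟨s(u, v), huv⟩, rfl⟩

theorem exists_multipacking_iff [Fintype V] [Fintype G.edgeSet]
    (hcross : ∀ u v, G.Adj u v → part u ≠ part v)
    (hfull : ∀ i j, i ≠ j → ∃ u v, G.Adj u v ∧ part u = i ∧ part v = j) :
    (∃ S : Finset (Vertex G k),
        IsMultipacking (arc G part) S ∧ 2 * k + k.choose 2 ≤ S.card) ↔
      ∃ w : Fin k → V, (∀ i, part (w i) = i) ∧ ∀ i j, ¬ G.Adj (w i) (w j) := by
  refine ⟨fun ⟨S, hS, hcard⟩ => exists_independent_section_of_isMultipacking hcross hS hcard, ?_⟩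
  rintro ⟨w, hw, hind⟩
  choose rep hrep using exists_edge_map_eq hfull
  exact ⟨packing w rep, isMultipacking_packing hcross hw hind hrep, (card_packing hw hrep).ge⟩

end MISReduction

theorem stmt_7 {V : Type*} [Fintype V] (k : ℕ) (G : SimpleGraph V)
    [Fintype G.edgeSet]
    (part : V → Fin k)
    (hcross : ∀ u v : V, G.Adj u v → part u ≠ part v)
    (hfull : ∀ i j : Fin k, i ≠ j → ∃ u v : V, G.Adj u v ∧ part u = i ∧ part v = j) :
    (∃ S : Finset (V ⊕ (G.edgeSet ⊕ (V ⊕ Fin k))),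
        IsMultipacking (fun p q =>
          match p, q with
          | Sum.inr (Sum.inl e), Sum.inl u => u ∈ (e : Sym2 V)
          | Sum.inr (Sum.inl e), Sum.inr (Sum.inl f) =>
              e ≠ f ∧ Sym2.map part (e : Sym2 V) = Sym2.map part (f : Sym2 V)
          | Sum.inl v, Sum.inr (Sum.inr (Sum.inl w)) => w = v
          | Sum.inr (Sum.inr (Sum.inr i)), Sum.inl v => part v = i
          | _, _ => False) S ∧ 2 * k + k * (k - 1) / 2 ≤ S.card) ↔
      (∃ I : Finset V, (∀ u ∈ I, ∀ v ∈ I, ¬ G.Adj u v) ∧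
        ∀ i : Fin k, (I.filter (fun v => part v = i)).card = 1) := by
  rw [G.exists_independent_transversal_iff, ← MISReduction.exists_multipacking_iff hcross hfull,
    ← Nat.choose_two_right]
  congr! 4 with S
  funext p q
  rcases p with _ | _ | _ | _ <;> rcases q with _ | _ | _ | _ <;> simp [MISReduction.arc]
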